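/- The WMMS fairness notion suffers from the inversion paradox for indivisible goods with additive valuations. Concretely, take 3 agents and 4 items e_1, …, e_4 with additive valuations v_1 = (12, 20, 45, 26), v_2 = (20, 12, 45, 26), v_3 = (10, 9, 11, 11) (listing item values in order), and entitlement vectors b = (0.46, 0.45, 0.09) and b' = (0.44, 0.45, 0.11). Then b' 3-improves b; the set of allocations acceptable under WMMS for b is nonempty and every such allocation gives agent 3 the bundle {e_1} of value 10; the set of allocations acceptable under WMMS for b' is nonempty and every such allocation gives agent 3 the bundle {e_2} of value 9. Hence every allocation acceptable for b gives agent 3 strictly more value than every allocation acceptable for b', even though b' >_3 b. -/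

import Mathlib

/-!
Partitions of the four items into three bundles are the fibres of the `3 ^ 4` maps from items
to agents, and all data are rational, so both WMMS vectors can be evaluated exactly:
`(46, 45, 11/5)` under `b` and `(2024/45, 46, 11/4)` under `b'`. Agent 3's share is positive but
met by any single item, so every agent receives at least one item. Under `b` agent 1 needs 46,
hence two items, and agent 2 then needs a single item worth 45: only `{e₂, e₄}` and `{e₃}` work,
leaving `{e₁}` to agent 3. Under `b'` agent 1 is content with `{e₃}` (`45 ≥ 2024/45`) while
agent 2 needs 46, hence two items, which forces `{e₁, e₄}` and leaves `{e₂}` to agent 3.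
-/

namespace Stmt11

/-- A partition of the items into (possibly empty) bundles. -/
def IsPartition {n m : ℕ} (A : Fin n → Finset (Fin m)) : Prop :=
  (∀ i j, i ≠ j → Disjoint (A i) (A j)) ∧ ∀ e, ∃ i, e ∈ A i

/-- Additive value of a bundle. -/
def bval {m : ℕ} (w : Fin m → ℝ) (S : Finset (Fin m)) : ℝ := ∑ e ∈ S, w e

/-- The additive valuations: v₁ = (12,20,45,26), v₂ = (20,12,45,26), v₃ = (10,9,11,11). -/
def v : Fin 3 → Fin 4 → ℝ :=
  ![![12, 20, 45, 26], ![20, 12, 45, 26], ![10, 9, 11, 11]]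

/-- Entitlement vector b = (0.46, 0.45, 0.09). -/
noncomputable def b : Fin 3 → ℝ := ![0.46, 0.45, 0.09]

/-- Entitlement vector b' = (0.44, 0.45, 0.11). -/
noncomputable def b' : Fin 3 → ℝ := ![0.44, 0.45, 0.11]

/-- The weighted maximin share of agent `i` under entitlements `β`:
the maximum over partitions `B` of `min_j (β i / β j) · v_i(B j)`. -/
noncomputable def wmms (β : Fin 3 → ℝ) (i : Fin 3) : ℝ :=
  sSup {t : ℝ | ∃ B : Fin 3 → Finset (Fin 4), IsPartition B ∧
    t = ⨅ j, (β i / β j) * bval (v i) (B j)}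

/-- Acceptable under WMMS: every agent gets at least her WMMS. -/
noncomputable def WmmsAcc (β : Fin 3 → ℝ) (A : Fin 3 → Finset (Fin 4)) : Prop :=
  IsPartition A ∧ ∀ i, wmms β i ≤ bval (v i) (A i)

open Finset

section Partition

variable {n m : ℕ}

def fiber (f : Fin m → Fin n) (j : Fin n) : Finset (Fin m) := univ.filter (f · = j)

theorem mem_fiber {f : Fin m → Fin n} {j : Fin n} {e : Fin m} : e ∈ fiber f j ↔ f e = j := by
  simp [fiber]

theorem isPartition_fiber (f : Fin m → Fin n) : IsPartition (fiber f) :=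
  ⟨fun _ _ hij => disjoint_left.2 fun _ hi hj => hij (mem_fiber.1 hi ▸ mem_fiber.1 hj),
    fun e => ⟨f e, mem_fiber.2 rfl⟩⟩

theorem IsPartition.exists_eq_fiber {A : Fin n → Finset (Fin m)} (hA : IsPartition A) :
    ∃ f : Fin m → Fin n, A = fiber f := by
  choose f hf using hA.2
  refine ⟨f, funext fun j => ext fun e =>
    ⟨fun he => mem_fiber.2 ?_, fun he => mem_fiber.1 he ▸ hf e⟩⟩
  by_contra hne
  exact disjoint_left.1 (hA.1 _ _ hne) (hf e) he

theorem isPartition_iff_exists_eq_fiber {A : Fin n → Finset (Fin m)} :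
    IsPartition A ↔ ∃ f : Fin m → Fin n, A = fiber f :=
  ⟨IsPartition.exists_eq_fiber, fun ⟨f, hf⟩ => hf ▸ isPartition_fiber f⟩

end Partition

def vRat : Fin 3 → Fin 4 → ℚ := ![![12, 20, 45, 26], ![20, 12, 45, 26], ![10, 9, 11, 11]]

def bRat : Fin 3 → ℚ := ![46 / 100, 45 / 100, 9 / 100]

def bRat' : Fin 3 → ℚ := ![44 / 100, 45 / 100, 11 / 100]

def valRat (i : Fin 3) (S : Finset (Fin 4)) : ℚ := ∑ e ∈ S, vRat i e

def shareRat (β : Fin 3 → ℚ) (i : Fin 3) (B : Fin 3 → Finset (Fin 4)) : ℚ :=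
  univ.inf' univ_nonempty fun j => β i / β j * valRat i (B j)

def wmmsRat (β : Fin 3 → ℚ) (i : Fin 3) : ℚ :=
  univ.sup' univ_nonempty fun f : Fin 4 → Fin 3 => shareRat β i (fiber f)

def AcceptableRat (β : Fin 3 → ℚ) (f : Fin 4 → Fin 3) : Prop :=
  ∀ i, wmmsRat β i ≤ valRat i (fiber f i)

theorem b_eq_ratCast : b = fun i => (bRat i : ℝ) := by
  funext i; fin_cases i <;> norm_num [b, bRat]

theorem b'_eq_ratCast : b' = fun i => (bRat' i : ℝ) := by
  funext i; fin_cases i <;> norm_num [b', bRat']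

theorem bval_eq_ratCast (i : Fin 3) (S : Finset (Fin 4)) : bval (v i) S = valRat i S := by
  have hv : ∀ e, v i e = vRat i e := by
    intro e; fin_cases i <;> fin_cases e <;> norm_num [v, vRat]
  simp only [bval, valRat, hv, Rat.cast_sum]

theorem iInf_eq_shareRat (β : Fin 3 → ℚ) (i : Fin 3) (B : Fin 3 → Finset (Fin 4)) :
    ⨅ j, ((β i : ℝ) / β j) * bval (v i) (B j) = shareRat β i B := by
  rw [shareRat, apply_inf'_eq_inf'_comp _ _ Rat.cast_min, ← inf'_univ_eq_ciInf]
  simp only [Function.comp_def, bval_eq_ratCast, Rat.cast_mul, Rat.cast_div]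

theorem wmms_ratCast (β : Fin 3 → ℚ) (i : Fin 3) :
    wmms (fun j => (β j : ℝ)) i = wmmsRat β i := by
  have hset : {t : ℝ | ∃ B : Fin 3 → Finset (Fin 4), IsPartition B ∧
      t = ⨅ j, ((β i : ℝ) / β j) * bval (v i) (B j)} =
      Set.range fun f => (shareRat β i (fiber f) : ℝ) := by
    ext t
    simp only [iInf_eq_shareRat, isPartition_iff_exists_eq_fiber, Set.mem_range]
    constructor
    · rintro ⟨_, ⟨f, rfl⟩, rfl⟩
      exact ⟨f, rfl⟩
    · rintro ⟨f, rfl⟩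
      exact ⟨_, ⟨f, rfl⟩, rfl⟩
  rw [wmms, hset, wmmsRat, apply_sup'_eq_sup'_comp _ _ Rat.cast_max, sup'_univ_eq_ciSup]
  rfl

theorem wmmsAcc_ratCast_iff (β : Fin 3 → ℚ) (A : Fin 3 → Finset (Fin 4)) :
    WmmsAcc (fun j => (β j : ℝ)) A ↔ ∃ f, A = fiber f ∧ AcceptableRat β f := by
  simp only [WmmsAcc, AcceptableRat, wmms_ratCast, bval_eq_ratCast, Rat.cast_le,
    isPartition_iff_exists_eq_fiber]
  constructor
  · rintro ⟨⟨f, rfl⟩, hf⟩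
    exact ⟨f, rfl, hf⟩
  · rintro ⟨f, rfl, hf⟩
    exact ⟨⟨f, rfl⟩, hf⟩

-- `Rat` arithmetic gets stuck in the elaborator's `decide` evaluation; the kernel computes it.
theorem wmmsRat_bRat : wmmsRat bRat = ![46, 45, 11 / 5] := by
  funext i; revert i; decide +kernel

theorem wmmsRat_bRat' : wmmsRat bRat' = ![2024 / 45, 46, 11 / 4] := by
  funext i; revert i; decide +kernel

theorem acceptableRat_bRat : AcceptableRat bRat ![2, 0, 1, 0] := by
  rw [AcceptableRat, wmmsRat_bRat]; decide +kernel

theorem acceptableRat_bRat' : AcceptableRat bRat' ![1, 2, 0, 1] := by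
  rw [AcceptableRat, wmmsRat_bRat']; decide +kernel

theorem AcceptableRat.fiber_two_eq_bRat {f : Fin 4 → Fin 3} (hf : AcceptableRat bRat f) :
    fiber f 2 = {0} := by
  rw [AcceptableRat, wmmsRat_bRat] at hf; revert f hf; decide +kernel

theorem AcceptableRat.fiber_two_eq_bRat' {f : Fin 4 → Fin 3} (hf : AcceptableRat bRat' f) :
    fiber f 2 = {1} := by
  rw [AcceptableRat, wmmsRat_bRat'] at hf; revert f hf; decide +kernel

theorem wmmsAcc_b_iff {A : Fin 3 → Finset (Fin 4)} :
    WmmsAcc b A ↔ ∃ f, A = fiber f ∧ AcceptableRat bRat f := by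
  rw [b_eq_ratCast]; exact wmmsAcc_ratCast_iff bRat A

theorem wmmsAcc_b'_iff {A : Fin 3 → Finset (Fin 4)} :
    WmmsAcc b' A ↔ ∃ f, A = fiber f ∧ AcceptableRat bRat' f := by
  rw [b'_eq_ratCast]; exact wmmsAcc_ratCast_iff bRat' A

theorem stmt_11 :
    -- b' 3-improves b
    (b 2 < b' 2 ∧ ∀ j, j ≠ 2 → b' j ≤ b j) ∧
    -- acceptance set for b is nonempty and every acceptable allocation gives agent 3 {e₁}, value 10
    (∃ A, WmmsAcc b A) ∧
    (∀ A, WmmsAcc b A → A 2 = {0} ∧ bval (v 2) (A 2) = 10) ∧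
    -- acceptance set for b' is nonempty and every acceptable allocation gives agent 3 {e₂}, value 9
    (∃ A, WmmsAcc b' A) ∧
    (∀ A, WmmsAcc b' A → A 2 = {1} ∧ bval (v 2) (A 2) = 9) ∧
    -- hence the inversion: agent 3 gets strictly more under b than under b'
    (∀ A A', WmmsAcc b A → WmmsAcc b' A' → bval (v 2) (A' 2) < bval (v 2) (A 2)) := by
  have improves : b 2 < b' 2 ∧ ∀ j, j ≠ 2 → b' j ≤ b j := by
    simp only [b_eq_ratCast, b'_eq_ratCast, Rat.cast_lt, Rat.cast_le]
    decide +kernel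
  have agent_three_b (A) (hA : WmmsAcc b A) : A 2 = {0} ∧ bval (v 2) (A 2) = 10 := by
    obtain ⟨f, rfl, hf⟩ := wmmsAcc_b_iff.1 hA
    rw [hf.fiber_two_eq_bRat]
    exact ⟨rfl, by simp [bval, v]⟩
  have agent_three_b' (A) (hA : WmmsAcc b' A) : A 2 = {1} ∧ bval (v 2) (A 2) = 9 := by
    obtain ⟨f, rfl, hf⟩ := wmmsAcc_b'_iff.1 hA
    rw [hf.fiber_two_eq_bRat']
    exact ⟨rfl, by simp [bval, v]⟩
  refine ⟨improves, ⟨_, wmmsAcc_b_iff.2 ⟨_, rfl, acceptableRat_bRat⟩⟩, agent_three_b,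
    ⟨_, wmmsAcc_b'_iff.2 ⟨_, rfl, acceptableRat_bRat'⟩⟩, agent_three_b', fun A A' hA hA' => ?_⟩
  rw [(agent_three_b A hA).2, (agent_three_b' A' hA').2]
  norm_num

end Stmt11
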